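/- Let f : ℝ^(N-1) → ℝ be Lipschitz with constant L and bounded by M (|f| ≤ M), and let Ω be the domain above the graph of f. Then for all x ∈ Ω with last coordinate x_N > 2M, one has δ(x)/2 ≤ x_N ≤ 2(2+L)·δ(x), where δ(x) is the distance from x to ∂Ω. -/

import Mathlib

noncomputable def projE (n : ℕ) (x : EuclideanSpace ℝ (Fin (n + 1))) :
    EuclideanSpace ℝ (Fin n) :=
  WithLp.toLp 2 (fun i : Fin n => x i.castSucc)

lemma coord_le_norm {m : ℕ} (v : EuclideanSpace ℝ (Fin m)) (i : Fin m) :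
    |v i| ≤ ‖v‖ := by
  rw [EuclideanSpace.norm_eq]
  calc |v i| = Real.sqrt ((v i) ^ 2) := (Real.sqrt_sq_eq_abs _).symm
  _ ≤ Real.sqrt (∑ j, ‖v j‖ ^ 2) := by
      apply Real.sqrt_le_sqrt
      have := Finset.single_le_sum (f := fun j => ‖v j‖ ^ 2)
        (fun j _ => by positivity) (Finset.mem_univ i)
      simpa [Real.norm_eq_abs, sq_abs] using this

lemma proj_le_norm {m : ℕ} (v : EuclideanSpace ℝ (Fin (m + 1))) :
    ‖projE m v‖ ≤ ‖v‖ := by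
  rw [EuclideanSpace.norm_eq, EuclideanSpace.norm_eq]
  apply Real.sqrt_le_sqrt
  rw [Fin.sum_univ_castSucc]
  have h : ∑ i : Fin m, ‖projE m v i‖ ^ 2 = ∑ i : Fin m, ‖v i.castSucc‖ ^ 2 := rfl
  rw [h]
  exact le_add_of_nonneg_right (by positivity)

/-- if `f` is `L`-Lipschitz and `|f| ≤ M`, and `Ω` is the domain above
the graph of `f`, then for `x ∈ Ω` with `x_N > 2M` one has
`δ(x)/2 ≤ x_N ≤ 2(2+L) δ(x)`. -/
theorem stmt1 (n : ℕ) (hn : 1 ≤ n) (L M : ℝ) (hL : 0 < L)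
    (f : EuclideanSpace ℝ (Fin n) → ℝ)
    (hf : ∀ x' y' : EuclideanSpace ℝ (Fin n), |f x' - f y'| ≤ L * ‖x' - y'‖)
    (hfM : ∀ x' : EuclideanSpace ℝ (Fin n), |f x'| ≤ M)
    (Ω : Set (EuclideanSpace ℝ (Fin (n + 1))))
    (hΩ : Ω = {x | f (projE n x) < x (Fin.last n)})
    (x : EuclideanSpace ℝ (Fin (n + 1))) (hx : x ∈ Ω)
    (hxN : 2 * M < x (Fin.last n)) :
    Metric.infDist x Ωᶜ / 2 ≤ x (Fin.last n) ∧
      x (Fin.last n) ≤ 2 * (2 + L) * Metric.infDist x Ωᶜ := by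
  subst hΩ
  set a := f (projE n x) with ha_def
  set xN := x (Fin.last n) with hxN_def
  have ha : a < xN := hx
  have haM : |a| ≤ M := hfM _
  have hM0 : (0 : ℝ) ≤ M := (abs_nonneg _).trans (hfM 0)
  -- the point directly below x on the graph
  set y : EuclideanSpace ℝ (Fin (n + 1)) :=
    x - (xN - a) • EuclideanSpace.single (Fin.last n) (1 : ℝ) with hy_def
  have hyproj : projE n y = projE n x := by
    ext i
    simp [hy_def, projE, EuclideanSpace.single_apply, (Fin.castSucc_lt_last i).ne]
  have hylast : y (Fin.last n) = a := by
    simp [hy_def, EuclideanSpace.single_apply, hxN_def]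
  have hyc : y ∈ {x : EuclideanSpace ℝ (Fin (n + 1)) | f (projE n x) < x (Fin.last n)}ᶜ := by
    simp only [Set.mem_compl_iff, Set.mem_setOf_eq, hyproj, hylast, not_lt]
    exact le_refl a
  have hne : ({x : EuclideanSpace ℝ (Fin (n + 1)) | f (projE n x) < x (Fin.last n)}ᶜ).Nonempty :=
    ⟨y, hyc⟩
  have hdxy : dist x y = xN - a := by
    rw [dist_eq_norm, hy_def]
    have : x - (x - (xN - a) • EuclideanSpace.single (Fin.last n) (1 : ℝ))
        = (xN - a) • EuclideanSpace.single (Fin.last n) (1 : ℝ) := by abel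
    rw [this, norm_smul, EuclideanSpace.norm_single]
    simp [abs_of_nonneg (by linarith : (0:ℝ) ≤ xN - a)]
  have hδle : Metric.infDist x {x : EuclideanSpace ℝ (Fin (n + 1)) |
      f (projE n x) < x (Fin.last n)}ᶜ ≤ xN - a :=
    hdxy ▸ Metric.infDist_le_dist_of_mem hyc
  have haM' : a ≤ M := (le_abs_self a).trans haM
  constructor
  · -- δ/2 ≤ xN
    have : xN - a ≤ 2 * xN := by
      have : -M ≤ a := (neg_le_of_abs_le haM)
      linarith
    linarith [hδle]
  · -- xN ≤ 2(2+L) δ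
    have hK : (0 : ℝ) < 2 * (2 + L) := by linarith
    have key : ∀ z ∈ {x : EuclideanSpace ℝ (Fin (n + 1)) |
        f (projE n x) < x (Fin.last n)}ᶜ, xN / (2 * (2 + L)) ≤ dist x z := by
      intro z hz
      simp only [Set.mem_compl_iff, Set.mem_setOf_eq, not_lt] at hz
      set d := dist x z with hd_def
      have hd0 : 0 ≤ d := dist_nonneg
      have h1 : |xN - z (Fin.last n)| ≤ d := by
        have h := coord_le_norm (x - z) (Fin.last n)
        simpa [hd_def, dist_eq_norm, hxN_def] using h
      have hsub : projE n x - projE n z = projE n (x - z) := rfl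
      have h2 : ‖projE n x - projE n z‖ ≤ d := by
        rw [hsub, hd_def, dist_eq_norm]
        exact proj_le_norm _
      have h3 : f (projE n z) - a ≤ L * ‖projE n x - projE n z‖ := by
        have := hf (projE n z) (projE n x)
        calc f (projE n z) - a ≤ |f (projE n z) - f (projE n x)| := le_abs_self _
        _ ≤ L * ‖projE n z - projE n x‖ := this
        _ = L * ‖projE n x - projE n z‖ := by rw [norm_sub_rev]
      have h4 : xN - a ≤ (1 + L) * d := by
        have hza : z (Fin.last n) ≤ f (projE n z) := hz
        have h1' : xN - z (Fin.last n) ≤ d := (le_abs_self _).trans h1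
        have h3' : f (projE n z) - a ≤ L * d :=
          h3.trans (mul_le_mul_of_nonneg_left h2 hL.le)
        nlinarith
      have h5 : xN < 2 * (xN - a) := by linarith
      rw [div_le_iff₀ hK]
      nlinarith
    have hinf : xN / (2 * (2 + L)) ≤ Metric.infDist x
        {x : EuclideanSpace ℝ (Fin (n + 1)) | f (projE n x) < x (Fin.last n)}ᶜ := by
      by_contra h
      push_neg at h
      obtain ⟨z, hz, hdz⟩ := (Metric.infDist_lt_iff hne).1 h
      exact absurd hdz (not_lt.2 (key z hz))
    calc xN ≤ Metric.infDist x {x : EuclideanSpace ℝ (Fin (n + 1)) |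
          f (projE n x) < x (Fin.last n)}ᶜ * (2 * (2 + L)) := (div_le_iff₀ hK).1 hinf
    _ = 2 * (2 + L) * Metric.infDist x {x : EuclideanSpace ℝ (Fin (n + 1)) |
          f (projE n x) < x (Fin.last n)}ᶜ := mul_comm _ _
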